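/- arXiv:2407.01901 — 6 statements merged into one kernel-verified Lean document; each statement's English description precedes it below -/
import Mathlib

section
/- Let 0 < r < 1 and let A = {z ∈ ℂ : r < |z| < 1} be the open annulus. Suppose F : ℂ → ℂ is continuous on the closed annulus {z : r ≤ |z| ≤ 1}, holomorphic on A, and satisfies Re(z·F(z)) = 0 for every z with |z| = r or |z| = 1. Then there exists a real constant C₁ such that F(z) = i·C₁/z for all z ∈ A. -/
open Complex Set


/-- Rigidity on the annulus `A = {r < |z| < 1}`: if `F` is continuous on the closed
annulus, holomorphic on `A`, and `Re (z * F z) = 0` on both boundary circles, then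
`F z = i C₁ / z` on `A` for some real constant `C₁`. -/
theorem stmt_2 (r : ℝ) (hr0 : 0 < r) (hr1 : r < 1) (F : ℂ → ℂ)
    (hF_cont : ContinuousOn F {z : ℂ | r ≤ ‖z‖ ∧ ‖z‖ ≤ 1})
    (hF_diff : ∀ z : ℂ, r < ‖z‖ → ‖z‖ < 1 → DifferentiableAt ℂ F z)
    (hbd : ∀ z : ℂ, (‖z‖ = r ∨ ‖z‖ = 1) → (z * F z).re = 0) :
    ∃ C₁ : ℝ, ∀ z : ℂ, r < ‖z‖ → ‖z‖ < 1 →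
      F z = Complex.I * C₁ / z := by
  set U : Set ℂ := {z : ℂ | r < ‖z‖ ∧ ‖z‖ < 1} with hU
  set K : Set ℂ := {z : ℂ | r ≤ ‖z‖ ∧ ‖z‖ ≤ 1} with hK
  set g : ℂ → ℂ := fun z => z * F z with hg
  have hUopen : IsOpen U :=
    (isOpen_lt continuous_const continuous_norm).inter
      (isOpen_lt continuous_norm continuous_const)
  have hKclosed : IsClosed K :=
    (isClosed_le continuous_const continuous_norm).inter
      (isClosed_le continuous_norm continuous_const)
  have hUK : U ⊆ K := fun z hz => ⟨hz.1.le, hz.2.le⟩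
  have hclos : closure U ⊆ K := closure_minimal hUK hKclosed
  have hfront : ∀ z ∈ frontier U, ‖z‖ = r ∨ ‖z‖ = 1 := by
    intro z hz
    have hzK : z ∈ K := hclos (frontier_subset_closure hz)
    have hzU : z ∉ U := by
      have := hz.2
      rwa [hUopen.interior_eq] at this
    rcases eq_or_lt_of_le hzK.1 with h | h
    · exact Or.inl h.symm
    rcases eq_or_lt_of_le hzK.2 with h' | h'
    · exact Or.inr h'
    exact absurd ⟨h, h'⟩ hzU
  have hgcont : ContinuousOn g K := continuousOn_id.mul hF_cont
  have hgdiff : DifferentiableOn ℂ g U := fun z hz =>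
    (differentiableAt_id.mul (hF_diff z hz.1 hz.2)).differentiableWithinAt
  have hgdc : DiffContOnCl ℂ g U := ⟨hgdiff, hgcont.mono hclos⟩
  have hUbdd : Bornology.IsBounded U :=
    (Metric.isBounded_ball (x := (0 : ℂ)) (r := 1)).subset fun z hz => by
      simpa [Complex.dist_eq] using hz.2
  -- Re g = 0 on U via maximum modulus applied to exp(±g)
  have hRe : ∀ z ∈ U, (g z).re = 0 := by
    have key : ∀ s : ℝ, s = 1 ∨ s = -1 → ∀ z ∈ U, Real.exp (s * (g z).re) ≤ 1 := by
      intro s hs z hzU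
      have hd : DiffContOnCl ℂ (fun w => Complex.exp ((s : ℂ) * g w)) U :=
        ⟨fun w hw => ((hgdiff w hw).const_mul _).cexp,
          (Complex.continuous_exp.comp_continuousOn
            ((continuousOn_const.mul hgcont).mono hclos))⟩
      have hb : ∀ w ∈ frontier U, ‖Complex.exp ((s : ℂ) * g w)‖ ≤ 1 := by
        intro w hw
        have hre : (g w).re = 0 := hbd w (hfront w hw)
        have : ((s : ℂ) * g w).re = 0 := by
          simp [Complex.mul_re, hre]
        rw [Complex.norm_exp, this, Real.exp_zero]
      have := Complex.norm_le_of_forall_mem_frontier_norm_le hUbdd hd hb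
        (subset_closure hzU)
      rwa [Complex.norm_exp, Complex.mul_re, Complex.ofReal_re,
        Complex.ofReal_im, zero_mul, sub_zero] at this
    intro z hzU
    have h1 := key 1 (Or.inl rfl) z hzU
    have h2 := key (-1) (Or.inr rfl) z hzU
    rw [one_mul, Real.exp_le_one_iff] at h1
    rw [neg_one_mul, Real.exp_le_one_iff, neg_nonpos] at h2
    linarith
  -- U is preconnected
  have hconn : IsPreconnected U := by
    have himg : U = (fun p : ℝ × ℝ => (p.1 : ℂ) * Complex.exp (p.2 * Complex.I)) ''
        (Ioo r 1 ×ˢ univ) := by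
      ext z
      constructor
      · rintro ⟨h1, h2⟩
        exact ⟨(‖z‖, Complex.arg z), ⟨⟨h1, h2⟩, trivial⟩, Complex.norm_mul_exp_arg_mul_I z⟩
      · rintro ⟨⟨t, θ⟩, ⟨⟨ht1, ht2⟩, -⟩, rfl⟩
        have : ‖(t : ℂ) * Complex.exp (θ * Complex.I)‖ = t := by
          rw [norm_mul, Complex.norm_exp_ofReal_mul_I, Complex.norm_real, Real.norm_eq_abs,
            abs_of_pos (hr0.trans ht1), mul_one]
        exact ⟨by rw [this]; exact ht1, by rw [this]; exact ht2⟩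
    rw [himg]
    exact (isPreconnected_Ioo.prod isPreconnected_univ).image _
      (Continuous.continuousOn (by continuity))
  -- U is nonempty
  have hz₀ : (((r + 1) / 2 : ℝ) : ℂ) ∈ U := by
    constructor <;>
      · rw [Complex.norm_real, Real.norm_eq_abs, abs_of_pos (by linarith)]
        linarith
  -- open mapping: g constant on U
  have han : AnalyticOnNhd ℂ g U := hgdiff.analyticOnNhd hUopen
  rcases han.is_constant_or_isOpen hconn with ⟨w, hw⟩ | hopen
  · -- conclude
    have hwre : w.re = 0 := by
      rw [← hw _ hz₀]; exact hRe _ hz₀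
    refine ⟨w.im, fun z hz1 hz2 => ?_⟩
    have hzne : z ≠ 0 := by
      intro h
      rw [h, norm_zero] at hz1; linarith
    have hgz : z * F z = w := hw z ⟨hz1, hz2⟩
    have hwI : w = Complex.I * (w.im : ℂ) := by
      apply Complex.ext <;> simp [hwre]
    rw [eq_div_iff hzne, ← hwI, mul_comm]
    exact hgz
  · -- contradiction: g '' U is open nonempty subset of the imaginary axis
    exfalso
    have hopenU : IsOpen (g '' U) := hopen U le_rfl hUopen
    set w := g (((r + 1) / 2 : ℝ) : ℂ) with hwdef
    have hwmem : w ∈ g '' U := ⟨_, hz₀, rfl⟩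
    rcases Metric.isOpen_iff.1 hopenU w hwmem with ⟨ε, hε, hball⟩
    have hmem : w + (ε / 2 : ℝ) ∈ g '' U := by
      apply hball
      rw [Metric.mem_ball, dist_eq_norm]
      simp only [add_sub_cancel_left]
      rw [Complex.norm_real, Real.norm_eq_abs, abs_of_pos (by linarith)]
      linarith
    rcases hmem with ⟨z, hzU, hz⟩
    have h1 : (g z).re = 0 := hRe z hzU
    have h2 : (w + (ε / 2 : ℝ)).re = ε / 2 := by
      have : w.re = 0 := hRe _ hz₀
      simp [this]
    rw [hz, h2] at h1
    linarith
end

section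
/- Let γ > 1, 0 < r < 1, Ω = {x ∈ ℝ² : r < |x| < 1}, and let C₁, C₂ ∈ ℝ satisfy ((γ−1)/γ)·(C₂ − C₁²/(2r²)) > 0. Define ρ : Ω → ℝ by ρ(x) = ( ((γ−1)/γ)·(C₂ − C₁²/(2|x|²)) )^{1/(γ−1)} and u : Ω → ℝ² by u(x) = C₁·(x₂, −x₁)/|x|², where |x|² = x₁² + x₂². Then for every x ∈ Ω: (i) ρ(x) > 0; (ii) div u(x) := ∂₁u₁(x) + ∂₂u₂(x) = 0; (iii) curl u(x) := ∂₁u₂(x) − ∂₂u₁(x) = 0; (iv) both components of u are harmonic at x (Δu(x) = 0); (v) u(x)·x = 0, so in particular u·n = 0 on both boundary circles; (vi) u(x)·∇ρ(x) = 0, hence div(ρu)(x) = 0; (vii) ρ(x)·(Du(x))(u(x)) + ∇(ρ^γ)(x) = 0, where Du(x) is the Jacobian of u at x and ∇(ρ^γ) is the gradient of the pressure P = ρ^γ. Consequently (ρ, u) is a non-trivial smooth solution of the stationary isentropic compressible Navier–Stokes system div(ρu) = 0, div(ρ u⊗u) + ∇P = μΔu + ∇((μ+λ)div u) with slip boundary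 conditions u·n = 0, curl u = 0 on ∂Ω (the viscous terms vanish by (ii)–(iv)). -/
open ContinuousLinearMap

private noncomputable def Dab (a b : ℝ) : ℝ × ℝ →L[ℝ] ℝ :=
  a • ContinuousLinearMap.fst ℝ ℝ ℝ + b • ContinuousLinearMap.snd ℝ ℝ ℝ

@[simp] private lemma Dab_apply (a b : ℝ) (v : ℝ × ℝ) : Dab a b v = a * v.1 + b * v.2 := by
  simp [Dab]

private lemma hasS (y : ℝ × ℝ) :
    HasFDerivAt (fun p : ℝ × ℝ => p.1 ^ 2 + p.2 ^ 2) (Dab (2*y.1) (2*y.2)) y := by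
  have hf : HasFDerivAt (fun p : ℝ × ℝ => p.1) (ContinuousLinearMap.fst ℝ ℝ ℝ) y := hasFDerivAt_fst
  have hs : HasFDerivAt (fun p : ℝ × ℝ => p.2) (ContinuousLinearMap.snd ℝ ℝ ℝ) y := hasFDerivAt_snd
  have h2 : HasFDerivAt (fun p : ℝ × ℝ => p.1 ^ 2 + p.2 ^ 2)
      (y.1 • ContinuousLinearMap.fst ℝ ℝ ℝ + y.1 • ContinuousLinearMap.fst ℝ ℝ ℝ +
       (y.2 • ContinuousLinearMap.snd ℝ ℝ ℝ + y.2 • ContinuousLinearMap.snd ℝ ℝ ℝ)) y := by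
    exact ((hf.mul hf).add (hs.mul hs)).congr_of_eventuallyEq
      (Filter.Eventually.of_forall fun p => by simp only [Pi.add_apply, Pi.mul_apply, pow_two])
  refine h2.congr_fderiv ?_
  refine ContinuousLinearMap.ext fun v => ?_
  simp [Dab]; ring

private lemma hasInvF {f : ℝ × ℝ → ℝ} {f' : ℝ × ℝ →L[ℝ] ℝ} {y : ℝ × ℝ}
    (hf : HasFDerivAt f f' y) (h : f y ≠ 0) :
    HasFDerivAt (fun p => (f p)⁻¹) ((-((f y) ^ 2)⁻¹) • f') y := by
  have h3 : HasFDerivAt (fun p => (f p)⁻¹)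
      ((ContinuousLinearMap.smulRight (1 : ℝ →L[ℝ] ℝ) (-((f y) ^ 2)⁻¹)).comp f') y :=
    (hasFDerivAt_inv h).comp y hf
  refine h3.congr_fderiv ?_
  refine ContinuousLinearMap.ext fun v => ?_
  simp [mul_comm]

private lemma hasDivD {f g : ℝ × ℝ → ℝ} {a b c d : ℝ} {y : ℝ × ℝ}
    (hf : HasFDerivAt f (Dab a b) y) (hg : HasFDerivAt g (Dab c d) y) (h : g y ≠ 0) :
    HasFDerivAt (fun p => f p / g p)
      (Dab ((a * g y - f y * c)/(g y)^2) ((b * g y - f y * d)/(g y)^2)) y := by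
  have h2 := hf.mul (hasInvF hg h)
  simp only [div_eq_mul_inv]
  refine h2.congr_fderiv ?_
  refine ContinuousLinearMap.ext fun v => ?_
  simp [Dab]; field_simp; ring

-- squared radius
private lemma hasS2 (y : ℝ × ℝ) :
    HasFDerivAt (fun p : ℝ × ℝ => (p.1 ^ 2 + p.2 ^ 2) ^ 2)
      (Dab (4*y.1*(y.1^2+y.2^2)) (4*y.2*(y.1^2+y.2^2))) y := by
  have h := (hasS y).mul (hasS y)
  have h2 : HasFDerivAt (fun p : ℝ × ℝ => (p.1 ^ 2 + p.2 ^ 2) ^ 2)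
      ((y.1^2+y.2^2) • Dab (2*y.1) (2*y.2) + (y.1^2+y.2^2) • Dab (2*y.1) (2*y.2)) y := by
    exact h.congr_of_eventuallyEq
      (Filter.Eventually.of_forall fun p => by simp only [Pi.mul_apply, pow_two])
  refine h2.congr_fderiv ?_
  refine ContinuousLinearMap.ext fun v => ?_
  simp [Dab]; ring

-- u₁
private lemma hasU1 (C₁ : ℝ) (y : ℝ × ℝ) (hy : y.1^2+y.2^2 ≠ 0) :
    HasFDerivAt (fun p : ℝ × ℝ => C₁ * p.2 / (p.1 ^ 2 + p.2 ^ 2))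
      (Dab (-2*C₁*y.1*y.2/(y.1^2+y.2^2)^2) (C₁*(y.1^2-y.2^2)/(y.1^2+y.2^2)^2)) y := by
  have hn : HasFDerivAt (fun p : ℝ × ℝ => C₁ * p.2) (Dab 0 C₁) y := by
    refine ((hasFDerivAt_snd).const_mul C₁).congr_fderiv ?_
    refine ContinuousLinearMap.ext fun v => ?_
    simp [Dab]
  refine (hasDivD hn (hasS y) hy).congr_fderiv ?_
  refine ContinuousLinearMap.ext fun v => ?_
  simp [Dab]; field_simp; ring

-- u₂
private lemma hasU2 (C₁ : ℝ) (y : ℝ × ℝ) (hy : y.1^2+y.2^2 ≠ 0) :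
    HasFDerivAt (fun p : ℝ × ℝ => -(C₁ * p.1) / (p.1 ^ 2 + p.2 ^ 2))
      (Dab (C₁*(y.1^2-y.2^2)/(y.1^2+y.2^2)^2) (2*C₁*y.1*y.2/(y.1^2+y.2^2)^2)) y := by
  have hn : HasFDerivAt (fun p : ℝ × ℝ => -(C₁ * p.1)) (Dab (-C₁) 0) y := by
    refine (((hasFDerivAt_fst).const_mul C₁).neg).congr_fderiv ?_
    refine ContinuousLinearMap.ext fun v => ?_
    simp [Dab]
  refine (hasDivD hn (hasS y) hy).congr_fderiv ?_
  refine ContinuousLinearMap.ext fun v => ?_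
  simp [Dab]; field_simp; ring

-- shape A*p.1*p.2/s²
private lemma hasQA (A : ℝ) (y : ℝ × ℝ) (hy : y.1^2+y.2^2 ≠ 0) :
    HasFDerivAt (fun p : ℝ × ℝ => A * p.1 * p.2 / (p.1 ^ 2 + p.2 ^ 2) ^ 2)
      (Dab ((A*y.2*(y.1^2+y.2^2) - 4*A*y.1^2*y.2)/(y.1^2+y.2^2)^3)
           ((A*y.1*(y.1^2+y.2^2) - 4*A*y.1*y.2^2)/(y.1^2+y.2^2)^3)) y := by
  have hn : HasFDerivAt (fun p : ℝ × ℝ => A * p.1 * p.2) (Dab (A*y.2) (A*y.1)) y := by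
    refine (((hasFDerivAt_fst).const_mul A).mul (hasFDerivAt_snd)).congr_fderiv ?_
    refine ContinuousLinearMap.ext fun v => ?_
    simp [Dab]; ring
  refine (hasDivD hn (hasS2 y) (pow_ne_zero 2 hy)).congr_fderiv ?_
  refine ContinuousLinearMap.ext fun v => ?_
  simp [Dab]; field_simp

-- shape B*(p.1²−p.2²)/s²
private lemma hasQB (B : ℝ) (y : ℝ × ℝ) (hy : y.1^2+y.2^2 ≠ 0) :
    HasFDerivAt (fun p : ℝ × ℝ => B * (p.1 ^ 2 - p.2 ^ 2) / (p.1 ^ 2 + p.2 ^ 2) ^ 2)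
      (Dab ((2*B*y.1*(y.1^2+y.2^2) - 4*B*y.1*(y.1^2-y.2^2))/(y.1^2+y.2^2)^3)
           ((-(2*B*y.2)*(y.1^2+y.2^2) - 4*B*y.2*(y.1^2-y.2^2))/(y.1^2+y.2^2)^3)) y := by
  have hf : HasFDerivAt (fun p : ℝ × ℝ => p.1) (ContinuousLinearMap.fst ℝ ℝ ℝ) y := hasFDerivAt_fst
  have hs : HasFDerivAt (fun p : ℝ × ℝ => p.2) (ContinuousLinearMap.snd ℝ ℝ ℝ) y := hasFDerivAt_snd
  have hn0 : HasFDerivAt (fun p : ℝ × ℝ => p.1 ^ 2 - p.2 ^ 2)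
      (y.1 • ContinuousLinearMap.fst ℝ ℝ ℝ + y.1 • ContinuousLinearMap.fst ℝ ℝ ℝ -
       (y.2 • ContinuousLinearMap.snd ℝ ℝ ℝ + y.2 • ContinuousLinearMap.snd ℝ ℝ ℝ)) y := by
    exact ((hf.mul hf).sub (hs.mul hs)).congr_of_eventuallyEq
      (Filter.Eventually.of_forall fun p => by simp only [Pi.sub_apply, Pi.mul_apply, pow_two])
  have hn : HasFDerivAt (fun p : ℝ × ℝ => B * (p.1 ^ 2 - p.2 ^ 2)) (Dab (2*B*y.1) (-(2*B*y.2))) y := by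
    refine (hn0.const_mul B).congr_fderiv ?_
    refine ContinuousLinearMap.ext fun v => ?_
    simp [Dab]; ring
  refine (hasDivD hn (hasS2 y) (pow_ne_zero 2 hy)).congr_fderiv ?_
  refine ContinuousLinearMap.ext fun v => ?_
  simp [Dab]; field_simp

-- G function
private lemma hasG (c C₁ C₂ : ℝ) (y : ℝ × ℝ) (hy : y.1^2+y.2^2 ≠ 0) :
    HasFDerivAt (fun p : ℝ × ℝ => c * (C₂ - C₁ ^ 2 / (2 * (p.1 ^ 2 + p.2 ^ 2))))
      (Dab (c * C₁^2 * y.1 / (y.1^2+y.2^2)^2) (c * C₁^2 * y.2 / (y.1^2+y.2^2)^2)) y := by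
  have h2S : HasFDerivAt (fun p : ℝ × ℝ => 2 * (p.1 ^ 2 + p.2 ^ 2)) (Dab (4*y.1) (4*y.2)) y := by
    refine ((hasS y).const_mul 2).congr_fderiv ?_
    refine ContinuousLinearMap.ext fun v => ?_
    simp [Dab]; ring
  have hc : HasFDerivAt (fun _ : ℝ × ℝ => C₁ ^ 2) (Dab 0 0) y := by
    refine (hasFDerivAt_const (C₁^2) y).congr_fderiv ?_
    refine ContinuousLinearMap.ext fun v => ?_
    simp [Dab]
  have hdiv := hasDivD hc h2S (mul_ne_zero two_ne_zero hy)
  have hsub := ((hasFDerivAt_const C₂ y).sub hdiv).const_mul c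
  refine hsub.congr_fderiv ?_
  refine ContinuousLinearMap.ext fun v => ?_
  simp [Dab]; field_simp; ring


set_option maxHeartbeats 1600000

/-- The explicit non-trivial non-vacuum solution of the stationary isentropic
compressible Navier–Stokes system with slip boundary conditions on the annulus
`Ω = {r < |x| < 1} ⊆ ℝ²`: with
`ρ x = (((γ−1)/γ)(C₂ − C₁²/(2|x|²)))^(1/(γ−1))` and
`u x = C₁ (x₂, −x₁)/|x|²`, one has, at every `x ∈ Ω`:
(i) `ρ x > 0`; (ii) `div u = 0`; (iii) `curl u = 0`; (iv) both components of `u`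
are harmonic; (v) `u(x) · x = 0`; (vi) `u · ∇ρ = 0` and `div (ρ u) = 0`;
(vii) `ρ (Du)(u) + ∇(ρ^γ) = 0`. -/
theorem stmt_3 (γ C₁ C₂ r : ℝ) (hγ : 1 < γ) (hr0 : 0 < r) (hr1 : r < 1)
    (hpos : 0 < ((γ - 1) / γ) * (C₂ - C₁ ^ 2 / (2 * r ^ 2)))
    (ρ : ℝ × ℝ → ℝ) (u : ℝ × ℝ → ℝ × ℝ)
    (hρ : ∀ x : ℝ × ℝ,
      ρ x = (((γ - 1) / γ) * (C₂ - C₁ ^ 2 / (2 * (x.1 ^ 2 + x.2 ^ 2)))) ^ (1 / (γ - 1)))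
    (hu : ∀ x : ℝ × ℝ,
      u x = (C₁ * x.2 / (x.1 ^ 2 + x.2 ^ 2), -(C₁ * x.1) / (x.1 ^ 2 + x.2 ^ 2))) :
    ∀ x : ℝ × ℝ, r ^ 2 < x.1 ^ 2 + x.2 ^ 2 → x.1 ^ 2 + x.2 ^ 2 < 1 →
      -- (i) no vacuum
      (0 < ρ x) ∧
      -- (ii) div u = 0
      ((fderiv ℝ u x (1, 0)).1 + (fderiv ℝ u x (0, 1)).2 = 0) ∧
      -- (iii) curl u = 0
      ((fderiv ℝ u x (1, 0)).2 - (fderiv ℝ u x (0, 1)).1 = 0) ∧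
      -- (iv) both components of u are harmonic
      (fderiv ℝ (fun y => (fderiv ℝ u y (1, 0)).1) x (1, 0)
        + fderiv ℝ (fun y => (fderiv ℝ u y (0, 1)).1) x (0, 1) = 0) ∧
      (fderiv ℝ (fun y => (fderiv ℝ u y (1, 0)).2) x (1, 0)
        + fderiv ℝ (fun y => (fderiv ℝ u y (0, 1)).2) x (0, 1) = 0) ∧
      -- (v) tangency u(x) · x = 0
      ((u x).1 * x.1 + (u x).2 * x.2 = 0) ∧
      -- (vi) u · ∇ρ = 0 and div (ρ u) = 0
      ((u x).1 * fderiv ℝ ρ x (1, 0) + (u x).2 * fderiv ℝ ρ x (0, 1) = 0) ∧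
      (fderiv ℝ (fun y => ρ y * (u y).1) x (1, 0)
        + fderiv ℝ (fun y => ρ y * (u y).2) x (0, 1) = 0) ∧
      -- (vii) ρ (Du)(u) + ∇(ρ^γ) = 0
      (ρ x • fderiv ℝ u x (u x)
        + (fderiv ℝ (fun y => ρ y ^ γ) x (1, 0), fderiv ℝ (fun y => ρ y ^ γ) x (0, 1))
        = (0, 0)) := by
  have hγ0 : γ ≠ 0 := by positivity
  have hγ1 : γ - 1 ≠ 0 := ne_of_gt (by linarith)
  have hfrac : 0 < (γ - 1) / γ := div_pos (by linarith) (by linarith)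
  have hC : 0 < C₂ - C₁ ^ 2 / (2 * r ^ 2) := by
    rcases mul_pos_iff.mp hpos with ⟨_, h⟩ | ⟨h, _⟩
    · exact h
    · linarith
  have hρ' : ρ = fun p : ℝ × ℝ =>
      (((γ - 1) / γ) * (C₂ - C₁ ^ 2 / (2 * (p.1 ^ 2 + p.2 ^ 2)))) ^ (1 / (γ - 1)) := funext hρ
  have hu' : u = fun p : ℝ × ℝ =>
      (C₁ * p.2 / (p.1 ^ 2 + p.2 ^ 2), -(C₁ * p.1) / (p.1 ^ 2 + p.2 ^ 2)) := funext hu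
  intro x hx1 hx2
  have hr2 : (0:ℝ) < r ^ 2 := by positivity
  have hs : 0 < x.1 ^ 2 + x.2 ^ 2 := lt_trans hr2 hx1
  have hs0 : x.1 ^ 2 + x.2 ^ 2 ≠ 0 := ne_of_gt hs
  have hle : C₁ ^ 2 / (2 * (x.1 ^ 2 + x.2 ^ 2)) ≤ C₁ ^ 2 / (2 * r ^ 2) := by
    gcongr <;> linarith
  have hG : 0 < ((γ - 1) / γ) * (C₂ - C₁ ^ 2 / (2 * (x.1 ^ 2 + x.2 ^ 2))) :=
    mul_pos hfrac (by linarith)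
  have hGne : ((γ - 1) / γ) * (C₂ - C₁ ^ 2 / (2 * (x.1 ^ 2 + x.2 ^ 2))) ≠ 0 := ne_of_gt hG
  simp only [hρ', hu']
  have hUat : ∀ y : ℝ × ℝ, y.1^2+y.2^2 ≠ 0 → HasFDerivAt
      (fun p : ℝ × ℝ => (C₁ * p.2 / (p.1 ^ 2 + p.2 ^ 2), -(C₁ * p.1) / (p.1 ^ 2 + p.2 ^ 2)))
      ((Dab (-2*C₁*y.1*y.2/(y.1^2+y.2^2)^2) (C₁*(y.1^2-y.2^2)/(y.1^2+y.2^2)^2)).prod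
       (Dab (C₁*(y.1^2-y.2^2)/(y.1^2+y.2^2)^2) (2*C₁*y.1*y.2/(y.1^2+y.2^2)^2))) y :=
    fun y hy => (hasU1 C₁ y hy).prodMk (hasU2 C₁ y hy)
  have hGx := hasG ((γ - 1) / γ) C₁ C₂ x hs0
  have hRx : HasFDerivAt (fun p : ℝ × ℝ =>
      (((γ - 1) / γ) * (C₂ - C₁ ^ 2 / (2 * (p.1 ^ 2 + p.2 ^ 2)))) ^ (1 / (γ - 1))) _ x :=
    hGx.rpow_const (Or.inl hGne)
  have hO : ∀ᶠ y in nhds x, y.1 ^ 2 + y.2 ^ 2 ≠ 0 := by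
    have hcont : Continuous fun p : ℝ × ℝ => p.1 ^ 2 + p.2 ^ 2 := by continuity
    exact (hcont.continuousAt (x := x)).eventually_ne hs0
  refine ⟨?_, ?_, ?_, ?_, ?_, ?_, ?_, ?_, ?_⟩
  · exact Real.rpow_pos_of_pos hG _
  · rw [(hUat x hs0).fderiv]
    simp
    all_goals ring
  · rw [(hUat x hs0).fderiv]
    simp
    all_goals ring
  · have hev1 : (fun y => (fderiv ℝ (fun p : ℝ × ℝ =>
        (C₁ * p.2 / (p.1 ^ 2 + p.2 ^ 2), -(C₁ * p.1) / (p.1 ^ 2 + p.2 ^ 2))) y (1, 0)).1)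
        =ᶠ[nhds x] fun p : ℝ × ℝ => -2*C₁*p.1*p.2/(p.1^2+p.2^2)^2 := by
      filter_upwards [hO] with y hy
      rw [(hUat y hy).fderiv]; simp
    have hev2 : (fun y => (fderiv ℝ (fun p : ℝ × ℝ =>
        (C₁ * p.2 / (p.1 ^ 2 + p.2 ^ 2), -(C₁ * p.1) / (p.1 ^ 2 + p.2 ^ 2))) y (0, 1)).1)
        =ᶠ[nhds x] fun p : ℝ × ℝ => C₁*(p.1^2-p.2^2)/(p.1^2+p.2^2)^2 := by
      filter_upwards [hO] with y hy
      rw [(hUat y hy).fderiv]; simp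
    rw [hev1.fderiv_eq, hev2.fderiv_eq, (hasQA (-2*C₁) x hs0).fderiv,
      (hasQB C₁ x hs0).fderiv]
    simp only [Dab_apply]
    field_simp
    ring
  · have hev3 : (fun y => (fderiv ℝ (fun p : ℝ × ℝ =>
        (C₁ * p.2 / (p.1 ^ 2 + p.2 ^ 2), -(C₁ * p.1) / (p.1 ^ 2 + p.2 ^ 2))) y (1, 0)).2)
        =ᶠ[nhds x] fun p : ℝ × ℝ => C₁*(p.1^2-p.2^2)/(p.1^2+p.2^2)^2 := by
      filter_upwards [hO] with y hy
      rw [(hUat y hy).fderiv]; simp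
    have hev4 : (fun y => (fderiv ℝ (fun p : ℝ × ℝ =>
        (C₁ * p.2 / (p.1 ^ 2 + p.2 ^ 2), -(C₁ * p.1) / (p.1 ^ 2 + p.2 ^ 2))) y (0, 1)).2)
        =ᶠ[nhds x] fun p : ℝ × ℝ => 2*C₁*p.1*p.2/(p.1^2+p.2^2)^2 := by
      filter_upwards [hO] with y hy
      rw [(hUat y hy).fderiv]; simp
    rw [hev3.fderiv_eq, hev4.fderiv_eq, (hasQB C₁ x hs0).fderiv,
      (hasQA (2*C₁) x hs0).fderiv]
    simp only [Dab_apply]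
    field_simp
    ring
  · field_simp
    ring
  · rw [hRx.fderiv]
    simp only [ContinuousLinearMap.coe_smul', Pi.smul_apply, Dab_apply, smul_eq_mul]
    field_simp
    ring
  · have hm1 : HasFDerivAt (fun y : ℝ × ℝ =>
        (((γ - 1) / γ) * (C₂ - C₁ ^ 2 / (2 * (y.1 ^ 2 + y.2 ^ 2)))) ^ (1 / (γ - 1)) *
          (C₁ * y.2 / (y.1 ^ 2 + y.2 ^ 2))) _ x := hRx.mul (hasU1 C₁ x hs0)
    have hm2 : HasFDerivAt (fun y : ℝ × ℝ =>
        (((γ - 1) / γ) * (C₂ - C₁ ^ 2 / (2 * (y.1 ^ 2 + y.2 ^ 2)))) ^ (1 / (γ - 1)) *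
          (-(C₁ * y.1) / (y.1 ^ 2 + y.2 ^ 2))) _ x := hRx.mul (hasU2 C₁ x hs0)
    rw [hm1.fderiv, hm2.fderiv]
    simp only [ContinuousLinearMap.add_apply, ContinuousLinearMap.coe_smul', Pi.smul_apply,
      Dab_apply, smul_eq_mul]
    field_simp
    ring
  · have hρxpos : (0:ℝ) <
        (((γ - 1) / γ) * (C₂ - C₁ ^ 2 / (2 * (x.1 ^ 2 + x.2 ^ 2)))) ^ (1 / (γ - 1)) :=
      Real.rpow_pos_of_pos hG _
    have hP : HasFDerivAt (fun y : ℝ × ℝ =>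
        ((((γ - 1) / γ) * (C₂ - C₁ ^ 2 / (2 * (y.1 ^ 2 + y.2 ^ 2)))) ^ (1 / (γ - 1))) ^ γ)
        _ x := hRx.rpow_const (Or.inl (ne_of_gt hρxpos))
    rw [(hUat x hs0).fderiv, hP.fderiv]
    have e1 : ((((γ - 1) / γ) * (C₂ - C₁ ^ 2 / (2 * (x.1 ^ 2 + x.2 ^ 2)))) ^ (1 / (γ - 1)))
        ^ (γ - 1) = ((γ - 1) / γ) * (C₂ - C₁ ^ 2 / (2 * (x.1 ^ 2 + x.2 ^ 2))) := by
      rw [← Real.rpow_mul hG.le, one_div, inv_mul_cancel₀ hγ1, Real.rpow_one]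
    have e2 : (((γ - 1) / γ) * (C₂ - C₁ ^ 2 / (2 * (x.1 ^ 2 + x.2 ^ 2)))) ^ (1 / (γ - 1) - 1)
        = (((γ - 1) / γ) * (C₂ - C₁ ^ 2 / (2 * (x.1 ^ 2 + x.2 ^ 2)))) ^ (1 / (γ - 1)) /
          (((γ - 1) / γ) * (C₂ - C₁ ^ 2 / (2 * (x.1 ^ 2 + x.2 ^ 2)))) := by
      rw [Real.rpow_sub hG, Real.rpow_one]
    simp only [ContinuousLinearMap.prod_apply, Dab_apply, ContinuousLinearMap.coe_smul',
      Pi.smul_apply, smul_eq_mul, Prod.smul_mk, Prod.mk_add_mk, Prod.mk.injEq]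
    rw [e1, e2]
    generalize (((γ - 1) / γ) * (C₂ - C₁ ^ 2 / (2 * (x.1 ^ 2 + x.2 ^ 2)))) ^ (1 / (γ - 1)) = R
    set G := ((γ - 1) / γ) * (C₂ - C₁ ^ 2 / (2 * (x.1 ^ 2 + x.2 ^ 2))) with hGg
    constructor
    · field_simp
      ring
    · field_simp
      ring
end

section
/- Let Ω ⊆ ℂ be a nonempty open connected set, let ψ : ℂ → ℂ be holomorphic on Ω with ψ(z) ≠ 0 for all z ∈ Ω, and let C₀ ∈ ℝ \ {0}. Define F(z) = i·C₀/ψ(z), which is holomorphic on Ω with derivative F'(z) = −i·C₀·ψ'(z)/ψ(z)². If Re( F(z)² · conj(F'(z)) ) = 0 for all z ∈ Ω, then there exist α ∈ ℝ and β ∈ ℂ such that ψ(z) = α·z + β for all z ∈ Ω. -/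
/-- Rigidity step of Theorem 1.1(c): if `ψ` is holomorphic and nonvanishing on a nonempty
open connected `Ω`, `C₀ ∈ ℝ \ {0}`, `F z = i C₀ / ψ z`, and `Re (F² conj F') = 0` on `Ω`,
then `ψ` is affine with real slope. -/
theorem stmt_4 (Ω : Set ℂ) (hΩ : IsOpen Ω) (hconn : IsConnected Ω)
    (ψ : ℂ → ℂ) (hψ : ∀ z ∈ Ω, DifferentiableAt ℂ ψ z)
    (hψ0 : ∀ z ∈ Ω, ψ z ≠ 0) (C₀ : ℝ) (hC₀ : C₀ ≠ 0)
    (hRe : ∀ z ∈ Ω,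
      ((Complex.I * C₀ / ψ z) ^ 2 *
        (starRingEnd ℂ) (deriv (fun w => Complex.I * C₀ / ψ w) z)).re = 0) :
    ∃ (α : ℝ) (β : ℂ), ∀ z ∈ Ω, ψ z = α * z + β := by
  obtain ⟨z₀, hz₀⟩ := hconn.nonempty
  have hψdo : DifferentiableOn ℂ ψ Ω := fun z hz => (hψ z hz).differentiableWithinAt
  have hψan : AnalyticOnNhd ℂ ψ Ω := hψdo.analyticOnNhd hΩ
  have hgan : AnalyticOnNhd ℂ (deriv ψ) Ω := hψan.deriv
  -- Step 1: the imaginary part of deriv ψ vanishes on Ω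
  have him : ∀ z ∈ Ω, (deriv ψ z).im = 0 := by
    intro z hz
    have hw : ψ z ≠ 0 := hψ0 z hz
    have hdF : deriv (fun w => Complex.I * C₀ / ψ w) z
        = -(Complex.I * C₀ * deriv ψ z) / ψ z ^ 2 := by
      rw [deriv_fun_div (differentiableAt_const _) (hψ z hz) hw, deriv_const]
      ring_nf
    have h := hRe z hz
    rw [hdF] at h
    set w := ψ z with hwdef
    set d := deriv ψ z with hddef
    have key : (Complex.I * C₀ / w) ^ 2 * (starRingEnd ℂ) (-(Complex.I * C₀ * d) / w ^ 2)
        = (-(C₀:ℂ) ^ 3 * Complex.I * (starRingEnd ℂ) d) / (w * (starRingEnd ℂ) w) ^ 2 := by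
      have hcw : (starRingEnd ℂ) w ≠ 0 := by simpa using hw
      simp only [map_div₀, map_neg, map_mul, map_pow, Complex.conj_I, Complex.conj_ofReal]
      field_simp
      ring_nf
      rw [Complex.I_sq]
      ring
    rw [key, Complex.mul_conj] at h
    have hcast : ((Complex.normSq w : ℝ) : ℂ) ^ 2 = ((Complex.normSq w ^ 2 : ℝ) : ℂ) := by
      push_cast; ring
    rw [hcast, Complex.div_ofReal_re] at h
    have hnum : (-(C₀:ℂ) ^ 3 * Complex.I * (starRingEnd ℂ) d).re = -(C₀ ^ 3 * d.im) := by
      simp [Complex.mul_re, Complex.mul_im, ← Complex.ofReal_pow]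
    rw [hnum] at h
    have hns : Complex.normSq w ^ 2 ≠ 0 :=
      pow_ne_zero _ (fun hh => hw (Complex.normSq_eq_zero.1 hh))
    have hnum0 : -(C₀ ^ 3 * d.im) = 0 := (div_eq_zero_iff.1 h).resolve_right hns
    have hC3 : C₀ ^ 3 ≠ 0 := pow_ne_zero _ hC₀
    have : C₀ ^ 3 * d.im = 0 := by linarith
    rcases mul_eq_zero.1 this with h' | h'
    · exact absurd h' hC3
    · exact h'
  -- Step 2: deriv ψ is constant on Ω (open mapping theorem)
  have hconst : ∃ c : ℂ, ∀ z ∈ Ω, deriv ψ z = c := by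
    rcases hgan.is_constant_or_isOpen hconn.isPreconnected with ⟨c, hc⟩ | hop
    · exact ⟨c, hc⟩
    · exfalso
      have hopen : IsOpen (deriv ψ '' Ω) := hop Ω le_rfl hΩ
      obtain ⟨ε, hε, hball⟩ := Metric.isOpen_iff.1 hopen (deriv ψ z₀) ⟨z₀, hz₀, rfl⟩
      set p : ℂ := deriv ψ z₀ + ((ε / 2 : ℝ) : ℂ) * Complex.I with hpdef
      have hp : p ∈ Metric.ball (deriv ψ z₀) ε := by
        simp only [hpdef, Metric.mem_ball, dist_eq_norm, add_sub_cancel_left]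
        have : ‖((ε / 2 : ℝ) : ℂ) * Complex.I‖ = ε / 2 := by
          simp [abs_of_pos hε]
        rw [this]; linarith
      obtain ⟨z', hz', hz'e⟩ := hball hp
      have h1 := him z' hz'
      rw [hz'e] at h1
      have h2 : p.im = (deriv ψ z₀).im + ε / 2 := by simp [hpdef]
      rw [h2, him z₀ hz₀] at h1
      linarith
  obtain ⟨c, hc⟩ := hconst
  have hcim : c.im = 0 := by rw [← hc z₀ hz₀]; exact him z₀ hz₀
  -- Step 3: ψ z - c z is constant on Ω
  set h : ℂ → ℂ := fun z => ψ z - c * z with hhdef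
  have hhan : AnalyticOnNhd ℂ h Ω :=
    (hψdo.sub ((differentiable_id.const_mul c).differentiableOn)).analyticOnNhd hΩ
  have hderiv0 : ∀ z ∈ Ω, HasDerivAt h 0 z := by
    intro z hz
    have := ((hψ z hz).hasDerivAt.fun_sub ((hasDerivAt_id z).const_mul c))
    simpa [hhdef, hc z hz] using this
  have hev : h =ᶠ[nhds z₀] fun _ => h z₀ := by
    obtain ⟨ε, hε, hball⟩ := Metric.isOpen_iff.1 hΩ z₀ hz₀
    have hballc : Convex ℝ (Metric.ball z₀ ε) := convex_ball z₀ ε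
    have hdiff : DifferentiableOn ℂ h (Metric.ball z₀ ε) := fun z hz =>
      ((hderiv0 z (hball hz)).differentiableAt).differentiableWithinAt
    have hfw : ∀ z ∈ Metric.ball z₀ ε, fderivWithin ℂ h (Metric.ball z₀ ε) z = 0 := by
      intro z hz
      have h1 : fderiv ℂ h z = 0 := by
        rw [(hderiv0 z (hball hz)).hasFDerivAt.fderiv]
        ext
        simp [ContinuousLinearMap.smulRight_apply]
      rw [fderivWithin_of_isOpen Metric.isOpen_ball hz, h1]
    have hcns : ∀ z ∈ Metric.ball z₀ ε, h z = h z₀ := fun z hz =>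
      hballc.is_const_of_fderivWithin_eq_zero hdiff hfw hz (Metric.mem_ball_self hε)
    filter_upwards [Metric.isOpen_ball.mem_nhds (Metric.mem_ball_self hε)] with z hz
    exact hcns z hz
  have heq : ∀ z ∈ Ω, h z = h z₀ :=
    fun z hz => hhan.eqOn_of_preconnected_of_eventuallyEq analyticOnNhd_const
      hconn.isPreconnected hz₀ hev hz
  refine ⟨c.re, h z₀, fun z hz => ?_⟩
  have := heq z hz
  have hcre : (c.re : ℂ) = c := Complex.ext rfl (by simp [hcim])
  rw [hcre]
  simp only [hhdef] at this
  linear_combination this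
end

section
/- (Zlotnik's inequality.) Let T > 0, let f, g : ℝ → ℝ be differentiable on [0, T], let h : ℝ → ℝ be continuous, and suppose f'(t) = g'(t) + h(f(t)) for all t ∈ [0, T]. Let N₁, N₂ > 0 and ξ ∈ ℝ be such that h(x) ≤ −N₁ for all x ≥ ξ, and g(t₂) − g(t₁) ≤ N₁·(t₂ − t₁) + N₂ for all 0 ≤ t₁ < t₂ ≤ T. Then f(t) ≤ max{f(0), ξ} + N₂ for all t ∈ [0, T]. -/
/-- Zlotnik's inequality: if `f' = g' + h(f)` on `[0, T]`, `h(x) ≤ −N₁` for `x ≥ ξ`,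
and `g(t₂) − g(t₁) ≤ N₁(t₂ − t₁) + N₂`, then `f(t) ≤ max (f 0) ξ + N₂` on `[0, T]`. -/
theorem stmt_8 (T : ℝ) (hT : 0 < T) (f g f' g' : ℝ → ℝ) (h : ℝ → ℝ)
    (hh : Continuous h)
    (hf : ∀ t ∈ Set.Icc (0 : ℝ) T, HasDerivWithinAt f (f' t) (Set.Icc 0 T) t)
    (hg : ∀ t ∈ Set.Icc (0 : ℝ) T, HasDerivWithinAt g (g' t) (Set.Icc 0 T) t)
    (hfg : ∀ t ∈ Set.Icc (0 : ℝ) T, f' t = g' t + h (f t))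
    (N₁ N₂ : ℝ) (hN₁ : 0 < N₁) (hN₂ : 0 < N₂) (ξ : ℝ)
    (hhξ : ∀ x, ξ ≤ x → h x ≤ -N₁)
    (hgN : ∀ t₁ t₂, 0 ≤ t₁ → t₁ < t₂ → t₂ ≤ T → g t₂ - g t₁ ≤ N₁ * (t₂ - t₁) + N₂) :
    ∀ t ∈ Set.Icc (0 : ℝ) T, f t ≤ max (f 0) ξ + N₂ := by
  intro t ht
  set M := max (f 0) ξ with hM
  by_contra hcon
  push_neg at hcon
  have hfc : ContinuousOn f (Set.Icc 0 T) := fun s hs => (hf s hs).continuousWithinAt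
  -- the set of times before t where f ≤ M
  set S : Set ℝ := Set.Icc 0 t ∩ f ⁻¹' Set.Iic M with hS
  have hsubT : Set.Icc (0:ℝ) t ⊆ Set.Icc 0 T := Set.Icc_subset_Icc le_rfl ht.2
  have hSclosed : IsClosed S :=
    (hfc.mono hsubT).preimage_isClosed_of_isClosed isClosed_Icc isClosed_Iic
  have h0S : (0:ℝ) ∈ S := ⟨⟨le_rfl, ht.1⟩, Set.mem_preimage.2 (Set.mem_Iic.2 (le_max_left _ _))⟩
  have hSbdd : BddAbove S := ⟨t, fun s hs => hs.1.2⟩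
  set t₁ := sSup S with ht₁def
  have ht₁S : t₁ ∈ S := hSclosed.csSup_mem ⟨0, h0S⟩ hSbdd
  have ht₁0 : 0 ≤ t₁ := ht₁S.1.1
  have ht₁t : t₁ < t := by
    rcases lt_or_eq_of_le ht₁S.1.2 with h' | h'
    · exact h'
    · have hle : f t₁ ≤ M := ht₁S.2
      rw [h'] at hle
      linarith
  have hsub : Set.Icc t₁ t ⊆ Set.Icc 0 T := Set.Icc_subset_Icc ht₁0 ht.2
  -- on (t₁, t], f > M ≥ ξ
  have hMgt : ∀ s ∈ Set.Ioc t₁ t, M < f s := by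
    intro s hs
    by_contra hle
    push_neg at hle
    exact absurd (le_csSup hSbdd (⟨⟨ht₁0.trans hs.1.le, hs.2⟩, Set.mem_preimage.2 (Set.mem_Iic.2 hle)⟩ : s ∈ S)) (not_le.2 hs.1)
  -- φ = g - N₁ • id - f is monotone on [t₁, t]
  have hφ : ∀ s ∈ Set.Icc t₁ t,
      HasDerivWithinAt (fun u => g u - N₁ * u - f u) (g' s - N₁ - f' s) (Set.Icc t₁ t) s := by
    intro s hs
    have := (((hg s (hsub hs)).sub ((hasDerivWithinAt_id s _).const_mul N₁)).sub
      (hf s (hsub hs))).mono hsub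
    simpa [mul_one, Pi.sub_def] using this
  have hmono : MonotoneOn (fun s => g s - N₁ * s - f s) (Set.Icc t₁ t) := by
    apply monotoneOn_of_hasDerivWithinAt_nonneg (convex_Icc t₁ t)
      (f' := fun s => g' s - N₁ - f' s)
    · intro s hs
      exact (hφ s hs).continuousWithinAt
    · intro s hs
      exact (hφ s (interior_subset hs)).mono interior_subset
    · intro s hs
      rw [interior_Icc] at hs
      have hsIcc := hsub (Set.Ioo_subset_Icc_self hs)
      have hξ : ξ ≤ f s := le_of_lt (lt_of_le_of_lt (le_max_right _ _)
        (hMgt s ⟨hs.1, hs.2.le⟩))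
      have h1 := hhξ (f s) hξ
      have h2 := hfg s hsIcc
      linarith
  have hkey := hmono (Set.left_mem_Icc.2 ht₁t.le) (Set.right_mem_Icc.2 ht₁t.le) ht₁t.le
  have hgbd := hgN t₁ t ht₁0 ht₁t ht.2
  have hft₁ : f t₁ ≤ M := ht₁S.2
  simp only at hkey
  nlinarith
end

section
/- Let b ∈ ℂ, r > 0, and let z, w ∈ ℂ satisfy |z − b| = r and |w − b| > r. Then Re( r² / ( (z − b)·(conj(w) − conj(b)) − r² ) ) = − Re( (z − b) / (z − w) ). -/
/-! On the circle `r² = (z - b) · conj (z - b)`, so after cancelling `z - b` the left-hand fraction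
becomes `conj ((z - b) / (w - z))`, whose real part is `-Re ((z - b) / (z - w))`. -/

open ComplexConjugate

theorem Complex.re_sq_norm_div_mul_conj_sub_sq_norm {a : ℂ} (ha : a ≠ 0) (u : ℂ) :
    ((‖a‖ : ℂ) ^ 2 / (a * conj u - (‖a‖ : ℂ) ^ 2)).re = -(a / (a - u)).re := by
  have hden : a * conj u - (‖a‖ : ℂ) ^ 2 = a * conj (u - a) := by
    rw [← Complex.mul_conj' a, map_sub]; ring
  rw [hden, ← Complex.mul_conj' a, mul_div_mul_left _ _ ha, ← map_div₀, Complex.conj_re,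
    ← neg_sub a u, div_neg, Complex.neg_re]

theorem stmt_13_general (b : ℂ) (r : ℝ) (hr : 0 < r) (z w : ℂ)
    (hz : ‖z - b‖ = r) :
    ((r : ℂ) ^ 2 / ((z - b) * ((starRingEnd ℂ) w - (starRingEnd ℂ) b) - (r : ℂ) ^ 2)).re
      = -(((z - b) / (z - w)).re) := by
  have hzb : z - b ≠ 0 := norm_ne_zero_iff.mp (hz ▸ hr.ne')
  rw [← map_sub, ← hz, Complex.re_sq_norm_div_mul_conj_sub_sq_norm hzb,
    sub_sub_sub_cancel_right]

/-- For `|z − b| = r` and `|w − b| > r`: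
`Re (r² / ((z − b)(conj w − conj b) − r²)) = − Re ((z − b)/(z − w))`. -/
theorem stmt_13 (b : ℂ) (r : ℝ) (hr : 0 < r) (z w : ℂ)
    (hz : ‖z - b‖ = r) (hw : r < ‖w - b‖) :
    ((r : ℂ) ^ 2 / ((z - b) * ((starRingEnd ℂ) w - (starRingEnd ℂ) b) - (r : ℂ) ^ 2)).re
      = -(((z - b) / (z - w)).re) :=
  stmt_13_general b r hr z w hz
end

section
/- Let z, w ∈ ℂ with |z| ≤ 1 and 0 < |w| < 1. Then (1 − |w|²) · |z − w/|w|| ≤ 4 · |z − 1/conj(w)| · |1 − z·conj(w)|. -/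
/-- For `|z| ≤ 1` and `0 < |w| < 1`:
`(1 − |w|²) |z − w/|w|| ≤ 4 |z − 1/conj w| · |1 − z conj w|`. -/
theorem stmt_15 (z w : ℂ) (hz : ‖z‖ ≤ 1) (hw0 : 0 < ‖w‖)
    (hw1 : ‖w‖ < 1) :
    (1 - ‖w‖ ^ 2) * ‖z - w / (‖w‖ : ℂ)‖
      ≤ 4 * ‖z - 1 / (starRingEnd ℂ) w‖
          * ‖1 - z * (starRingEnd ℂ) w‖ := by
  set r : ℝ := ‖w‖ with hr
  have hw : w ≠ 0 := norm_pos_iff.mp hw0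
  have hcw : (starRingEnd ℂ) w ≠ 0 := by simpa using hw
  have hrne : (r : ℂ) ≠ 0 := by
    exact_mod_cast (Complex.ofReal_ne_zero.mpr (ne_of_gt hw0))
  have hmulconj : (starRingEnd ℂ) w * w = ((r ^ 2 : ℝ) : ℂ) := by
    rw [mul_comm, Complex.mul_conj]
    norm_cast
    rw [Complex.normSq_eq_norm_sq]
  have hinv : 1 / (starRingEnd ℂ) w = w / ((r ^ 2 : ℝ) : ℂ) := by
    rw [eq_div_iff (by exact_mod_cast pow_ne_zero 2 (Complex.ofReal_ne_zero.mpr (ne_of_gt hw0)))]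
    field_simp
    rw [hmulconj]
  have habs_inv : ‖1 / (starRingEnd ℂ) w‖ = 1 / r := by
    simp [map_div₀, Complex.norm_conj, hr]
  set A : ℝ := ‖z - 1 / (starRingEnd ℂ) w‖ with hA
  set B : ℝ := ‖z - w / (r : ℂ)‖ with hB
  -- Step 1: |1 - z conj w| = r * A
  have h1 : ‖1 - z * (starRingEnd ℂ) w‖ = r * A := by
    have : 1 - z * (starRingEnd ℂ) w = (starRingEnd ℂ) w * (1 / (starRingEnd ℂ) w - z) := by
      field_simp
    rw [this, norm_mul, Complex.norm_conj, norm_sub_rev]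
  -- Step 2: (1 - r)/r ≤ A
  have hA1 : (1 - r) / r ≤ A := by
    have h2 : 1 / r - ‖z‖ ≤ A := by
      have h3 := abs_norm_sub_norm_le (1 / (starRingEnd ℂ) w) z
      rw [habs_inv, norm_sub_rev] at h3
      linarith [le_abs_self (1 / r - ‖z‖)]
    have : 1 / r - 1 ≤ A := by linarith
    calc (1 - r) / r = 1 / r - 1 := by rw [sub_div, div_self (ne_of_gt hw0)]
      _ ≤ A := this
  -- Step 3: B ≤ A + (1 - r)/r
  have hgap : ‖1 / (starRingEnd ℂ) w - w / (r : ℂ)‖ = (1 - r) / r := by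
    rw [hinv]
    have : w / ((r ^ 2 : ℝ) : ℂ) - w / (r : ℂ) = w * (((1 - r) / r ^ 2 : ℝ) : ℂ) := by
      push_cast
      field_simp
    rw [this, norm_mul, Complex.norm_real, Real.norm_eq_abs, abs_of_nonneg (div_nonneg (by linarith) (by positivity))]
    rw [← hr]
    field_simp
  have hA2 : B ≤ A + (1 - r) / r := by
    calc B = ‖(z - 1 / (starRingEnd ℂ) w) + (1 / (starRingEnd ℂ) w - w / (r : ℂ))‖ := by
            rw [hB]; congr 1; ring
      _ ≤ A + (1 - r) / r := by
            rw [← hgap]; exact norm_add_le _ _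
  have hBA : B ≤ 2 * A := by linarith
  have hrA : 1 - r ≤ r * A := by
    have := (div_le_iff₀ hw0).mp hA1
    linarith
  have hB0 : 0 ≤ B := norm_nonneg _
  have hA0 : 0 ≤ A := norm_nonneg _
  rw [h1]
  nlinarith [mul_nonneg hA0 hA0, mul_le_mul_of_nonneg_left hBA (by nlinarith : (0:ℝ) ≤ 1 - r^2)]
end
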